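/- arXiv:math/0604573 — 3 statements merged into one kernel-verified Lean document; each statement's English description precedes it below -/
import Mathlib

section
/- Suppose X₁,…,X_m ∈ S^n are positive definite and satisfy H₀ - Σ_{i=1}^m X_i ⪰ 0 and X_i ⪰ H_i X_i^{-1} H_i for all i. Then the block arrowhead matrix J with (0,0)-block H₀ - (1/2)Σ X_i, (0,i)- and (i,0)-blocks (1/2)H_i, diagonal blocks (1/2)X_i, and zero off-diagonal blocks elsewhere, is positive semidefinite. -/
/-!
Since the diagonal blocks `X i / 2` are positive definite, `J` is positive semidefinite iff its
Schur complement `H₀ - (1/2) ∑ X i - (1/2) ∑ H i (X i)⁻¹ H i` is. That complement splits as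
`(H₀ - ∑ X i) + (1/2) ∑ (X i - H i (X i)⁻¹ H i)`, a sum of positive semidefinite matrices.
-/

open Matrix

namespace Matrix

variable {l m o R : Type*} [Fintype m] [Fintype o]

/-- The block row `[C k]ₖ`: its column `(j, k)` is column `j` of `C k`. -/
def blockRow (C : o → Matrix l m R) : Matrix l (m × o) R :=
  of fun a p => C p.2 a p.1

theorem blockRow_mul_conjTranspose_blockRow [NonUnitalNonAssocSemiring R] [StarRing R]
    (C D : o → Matrix l m R) : blockRow C * (blockRow D)ᴴ = ∑ k, C k * (D k)ᴴ := by
  ext a b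
  simp only [blockRow, mul_apply, conjTranspose_apply, of_apply, Fintype.sum_prod_type, sum_apply]
  exact Finset.sum_comm

variable [DecidableEq o]

theorem blockRow_mul_blockDiagonal [NonUnitalNonAssocSemiring R] (C : o → Matrix l m R)
    (D : o → Matrix m m R) : blockRow C * blockDiagonal D = blockRow fun k => C k * D k := by
  ext a ⟨j, k⟩
  simp [blockRow, mul_apply, Fintype.sum_prod_type, blockDiagonal_apply, mul_ite]

theorem dotProduct_blockDiagonal_mulVec [NonUnitalNonAssocSemiring R]
    (D : o → Matrix m m R) (x y : m × o → R) :
    x ⬝ᵥ blockDiagonal D *ᵥ y = ∑ k, (fun i => x (i, k)) ⬝ᵥ D k *ᵥ fun i => y (i, k) := by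
  simp only [dotProduct, mulVec, Fintype.sum_prod_type, blockDiagonal_apply, ite_mul, zero_mul,
    Finset.sum_ite_eq, Finset.mem_univ, if_true, Finset.mul_sum]
  rw [Finset.sum_comm]

theorem PosDef.blockDiagonal [Ring R] [PartialOrder R] [StarRing R] [IsOrderedCancelAddMonoid R]
    {D : o → Matrix m m R} (hD : ∀ k, (D k).PosDef) : (blockDiagonal D).PosDef := by
  refine .of_dotProduct_mulVec_pos ?_ fun x hx => ?_
  · rw [IsHermitian, blockDiagonal_conjTranspose]
    exact congrArg _ (funext fun k => (hD k).1)
  obtain ⟨⟨i, k⟩, hik⟩ := Function.ne_iff.mp hx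
  rw [dotProduct_blockDiagonal_mulVec]
  refine Finset.sum_pos' (fun j _ => ?_) ⟨k, Finset.mem_univ _, ?_⟩
  · exact (hD j).posSemidef.dotProduct_mulVec_nonneg _
  · exact (hD k).dotProduct_mulVec_pos fun h => hik (congrFun h i)

theorem inv_blockDiagonal [CommRing R] [DecidableEq m] {D : o → Matrix m m R}
    (hD : ∀ k, IsUnit (D k).det) : (blockDiagonal D)⁻¹ = blockDiagonal fun k => (D k)⁻¹ := by
  refine inv_eq_right_inv ?_
  rw [← blockDiagonal_mul, ← blockDiagonal_one]
  exact congrArg _ (funext fun k => mul_nonsing_inv _ (hD k))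

theorem posSemidef_fromBlocks_blockRow_blockDiagonal_iff {K : Type*} [Field K] [PartialOrder K]
    [StarRing K] [StarOrderedRing K] [Fintype l] [DecidableEq m]
    (A : Matrix l l K) (C : o → Matrix l m K) {D : o → Matrix m m K} (hD : ∀ k, (D k).PosDef) :
    (fromBlocks A (blockRow C) (blockRow C)ᴴ (blockDiagonal D)).PosSemidef ↔
      (A - ∑ k, C k * (D k)⁻¹ * (C k)ᴴ).PosSemidef := by
  have hDiag := PosDef.blockDiagonal hD
  let := hDiag.isUnit.invertible
  rw [PosDef.fromBlocks₂₂ _ _ hDiag, inv_blockDiagonal fun k => (hD k).isUnit.map detMonoidHom,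
    blockRow_mul_blockDiagonal, blockRow_mul_conjTranspose_blockRow]

end Matrix

theorem arrowhead_posSemidef_general {n m : ℕ}
    (H₀ : Matrix (Fin n) (Fin n) ℝ) (H X : Fin m → Matrix (Fin n) (Fin n) ℝ)
    (hH : ∀ i, (H i).IsSymm)
    (hXpd : ∀ i, (X i).PosDef)
    (h1 : (H₀ - ∑ i : Fin m, X i).PosSemidef)
    (h2 : ∀ i, (X i - H i * (X i)⁻¹ * H i).PosSemidef)
    (B : Matrix (Fin n) (Fin n × Fin m) ℝ)
    (hB : ∀ a p, B a p = ((1 / 2 : ℝ) • H p.2) a p.1) :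
    (Matrix.fromBlocks (H₀ - (1 / 2 : ℝ) • ∑ i : Fin m, X i) B Bᵀ
        (Matrix.blockDiagonal fun i : Fin m => (1 / 2 : ℝ) • X i)).PosSemidef := by
  have hBrow : B = blockRow fun i => (1 / 2 : ℝ) • H i := ext hB
  have hterm (i : Fin m) : (1 / 2 : ℝ) • H i * ((1 / 2 : ℝ) • X i)⁻¹ * ((1 / 2 : ℝ) • H i)ᴴ =
      (1 / 2 : ℝ) • (H i * (X i)⁻¹ * H i) := by
    have hinv : ((1 / 2 : ℝ) • X i)⁻¹ = (2 : ℝ) • (X i)⁻¹ := inv_eq_left_inv <| by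
      rw [smul_mul_smul_comm, nonsing_inv_mul _ ((isUnit_iff_isUnit_det _).mp (hXpd i).isUnit)]
      norm_num
    rw [hinv, conjTranspose_eq_transpose_of_trivial, transpose_smul, (hH i).eq]
    simp only [smul_mul_assoc, mul_smul_comm, smul_smul]
    norm_num
  have hsplit : H₀ - (1 / 2 : ℝ) • ∑ i, X i - ∑ i, (1 / 2 : ℝ) • (H i * (X i)⁻¹ * H i) =
      (H₀ - ∑ i, X i) + ∑ i, (1 / 2 : ℝ) • (X i - H i * (X i)⁻¹ * H i) := by
    simp only [smul_sub, Finset.sum_sub_distrib, ← Finset.smul_sum]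
    module
  rw [← conjTranspose_eq_transpose_of_trivial, hBrow,
    posSemidef_fromBlocks_blockRow_blockDiagonal_iff _ _ fun i => (hXpd i).smul (by norm_num),
    Finset.sum_congr rfl fun i _ => hterm i, hsplit]
  exact h1.add (posSemidef_sum _ fun i _ => (h2 i).smul (by norm_num))

theorem arrowhead_posSemidef {n m : ℕ}
    (H₀ : Matrix (Fin n) (Fin n) ℝ) (H X : Fin m → Matrix (Fin n) (Fin n) ℝ)
    (h0 : H₀.IsSymm) (hH : ∀ i, (H i).IsSymm) (hX : ∀ i, (X i).IsSymm)
    (hXpd : ∀ i, (X i).PosDef)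
    (h1 : (H₀ - ∑ i : Fin m, X i).PosSemidef)
    (h2 : ∀ i, (X i - H i * (X i)⁻¹ * H i).PosSemidef)
    (B : Matrix (Fin n) (Fin n × Fin m) ℝ)
    (hB : ∀ a p, B a p = ((1 / 2 : ℝ) • H p.2) a p.1) :
    (Matrix.fromBlocks (H₀ - (1 / 2 : ℝ) • ∑ i : Fin m, X i) B Bᵀ
        (Matrix.blockDiagonal fun i : Fin m => (1 / 2 : ℝ) • X i)).PosSemidef :=
  arrowhead_posSemidef_general H₀ H X hH hXpd h1 h2 B hB
end

section
/- (Feasibility of Ben-Tal–Nemirovski implies quadratic Positivstellensatz feasibility.) Suppose X₁,…,X_m ∈ S^n satisfy H₀ - Σ X_i ⪰ 0 and X_i ± H_i ⪰ 0 for all i, where all X_i are positive definite. Then there exist an SOS quadratic polynomial matrix S₀ ∈ Σ[δ]^n of degree ≤ 2 and positive semidefinite constant matrices S₁,…,S_m ∈ S^n such that H₀ + Σ δ_i H_i = S₀(δ) + Σ_{i=1}^m (1 - δ_i²)·S_i identically in δ. -/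
open Matrix MvPolynomial

/-- A symmetric polynomial matrix `S` is a sum of squares if `S = T * Tᵀ`
for some polynomial matrix `T`. -/
def IsSOSMatrix {n m : ℕ} (S : Matrix (Fin n) (Fin n) (MvPolynomial (Fin m) ℝ)) : Prop :=
  ∃ (q : ℕ) (T : Matrix (Fin n) (Fin q) (MvPolynomial (Fin m) ℝ)), S = T * Tᵀ

/-!
For each `i`, `((1 + δᵢ)/2)² (Xᵢ + Hᵢ) + ((1 - δᵢ)/2)² (Xᵢ - Hᵢ) = ((1 + δᵢ²)/2) Xᵢ + δᵢ Hᵢ`,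
and `((1 + δᵢ²)/2) Xᵢ = Xᵢ - (1 - δᵢ²) Xᵢ/2`. Summing over `i` and adding `H₀ - ∑ Xᵢ` writes
`H₀ + ∑ δᵢ Hᵢ` as an SOS matrix of degree two plus `∑ (1 - δᵢ²) Xᵢ/2`: each summand of the SOS
part is a square of a linear polynomial times a positive semidefinite constant matrix, which
factors as `B Bᵀ`.
-/

lemma isSOSMatrix_zero {n m : ℕ} :
    IsSOSMatrix (0 : Matrix (Fin n) (Fin n) (MvPolynomial (Fin m) ℝ)) :=
  ⟨0, 0, by ext i j; simp [Matrix.mul_apply]⟩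

lemma IsSOSMatrix.add {n m : ℕ} {S S' : Matrix (Fin n) (Fin n) (MvPolynomial (Fin m) ℝ)}
    (h : IsSOSMatrix S) (h' : IsSOSMatrix S') : IsSOSMatrix (S + S') := by
  obtain ⟨q, T, rfl⟩ := h
  obtain ⟨q', T', rfl⟩ := h'
  refine ⟨q + q', (fromCols T T').submatrix id finSumFinEquiv.symm, ?_⟩
  rw [transpose_submatrix, submatrix_mul_equiv, transpose_fromCols, fromCols_mul_fromRows,
    submatrix_id_id]

lemma isSOSMatrix_sum {n m : ℕ} {ι : Type*} (s : Finset ι)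
    {f : ι → Matrix (Fin n) (Fin n) (MvPolynomial (Fin m) ℝ)}
    (h : ∀ i ∈ s, IsSOSMatrix (f i)) : IsSOSMatrix (∑ i ∈ s, f i) :=
  Finset.sum_induction f _ (fun _ _ => IsSOSMatrix.add) isSOSMatrix_zero h

open scoped MatrixOrder in
lemma Matrix.PosSemidef.exists_eq_mul_transpose {ι : Type*} [Fintype ι] [DecidableEq ι]
    {A : Matrix ι ι ℝ} (hA : A.PosSemidef) : ∃ B : Matrix ι ι ℝ, A = B * Bᵀ :=
  CStarAlgebra.nonneg_iff_eq_mul_star_self.mp hA.nonneg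

lemma isSOSMatrix_sq_smul_map_C {n m : ℕ} (p : MvPolynomial (Fin m) ℝ)
    {A : Matrix (Fin n) (Fin n) ℝ} (hA : A.PosSemidef) :
    IsSOSMatrix (p ^ 2 • (A.map C : Matrix (Fin n) (Fin n) (MvPolynomial (Fin m) ℝ))) := by
  obtain ⟨B, rfl⟩ := hA.exists_eq_mul_transpose
  refine ⟨n, p • B.map C, ?_⟩
  rw [transpose_smul, Matrix.smul_mul, Matrix.mul_smul, smul_smul, ← sq, ← transpose_map,
    ← Matrix.map_mul]

lemma smul_map_C_mem_matrix_restrictTotalDegree {σ R ι : Type*} [CommSemiring R]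
    {p : MvPolynomial σ R} {d : ℕ} (hp : p.totalDegree ≤ d) (A : Matrix ι ι R) :
    p • A.map C ∈ (restrictTotalDegree σ R d).matrix := fun a b => by
  change _ ∈ restrictTotalDegree σ R d
  rw [Matrix.smul_apply, map_apply, smul_eq_mul, mem_restrictTotalDegree]
  exact (totalDegree_mul _ _).trans (by rwa [totalDegree_C, add_zero])

lemma totalDegree_C_mul_sq_le {σ R : Type*} [CommSemiring R] (a : R) {p : MvPolynomial σ R}
    (hp : p.totalDegree ≤ 1) : ((C a * p) ^ 2).totalDegree ≤ 2 := by
  have := totalDegree_mul (C a) p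
  rw [totalDegree_C, zero_add] at this
  exact (totalDegree_pow _ 2).trans (by omega)

lemma smul_eq_sq_smul_add_sq_smul {A M : Type*} [CommRing A] [AddCommGroup M] [Module A M]
    {c : A} (hc : 2 * c = 1) (x : A) (P Q : M) :
    x • Q = (c * (1 + x)) ^ 2 • (P + Q) + (c * (1 - x)) ^ 2 • (P - Q) +
      (1 - x ^ 2) • c • P - P := by
  linear_combination (norm := module)
    (-(x * (1 + 2 * c)) * hc) • Q - ((c * (1 + x ^ 2) + 1) * hc) • P

noncomputable def bentalCertificate {n m : ℕ} (H₀ : Matrix (Fin n) (Fin n) ℝ)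
    (H X : Fin m → Matrix (Fin n) (Fin n) ℝ) :
    Matrix (Fin n) (Fin n) (MvPolynomial (Fin m) ℝ) :=
  (H₀ - ∑ i, X i).map C + ∑ i,
    ((C 2⁻¹ * (1 + MvPolynomial.X i) : MvPolynomial (Fin m) ℝ) ^ 2 • (X i + H i).map C +
      (C 2⁻¹ * (1 - MvPolynomial.X i) : MvPolynomial (Fin m) ℝ) ^ 2 • (X i - H i).map C)

section bentalCertificate

variable {n m : ℕ} {H₀ : Matrix (Fin n) (Fin n) ℝ} {H X : Fin m → Matrix (Fin n) (Fin n) ℝ}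

lemma isSOSMatrix_bentalCertificate (h1 : (H₀ - ∑ i, X i).PosSemidef)
    (h2 : ∀ i, (X i + H i).PosSemidef) (h3 : ∀ i, (X i - H i).PosSemidef) :
    IsSOSMatrix (bentalCertificate H₀ H X) := by
  have hconst := isSOSMatrix_sq_smul_map_C (1 : MvPolynomial (Fin m) ℝ) h1
  rw [one_pow, one_smul] at hconst
  exact hconst.add <| isSOSMatrix_sum _ fun i _ =>
    (isSOSMatrix_sq_smul_map_C _ (h2 i)).add (isSOSMatrix_sq_smul_map_C _ (h3 i))

lemma bentalCertificate_mem_matrix_restrictTotalDegree :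
    bentalCertificate H₀ H X ∈ (restrictTotalDegree (Fin m) ℝ 2).matrix := by
  have hconst := smul_map_C_mem_matrix_restrictTotalDegree
    (p := (1 : MvPolynomial (Fin m) ℝ)) (d := 2) (by simp) (H₀ - ∑ i, X i)
  rw [one_smul] at hconst
  refine add_mem hconst (sum_mem fun i _ => add_mem ?_ ?_) <;>
    refine smul_map_C_mem_matrix_restrictTotalDegree (totalDegree_C_mul_sq_le _ ?_) _
  · exact (totalDegree_add _ _).trans (by simp [totalDegree_X])
  · exact (totalDegree_sub _ _).trans (by simp [totalDegree_X])

lemma add_sum_X_smul_eq_bentalCertificate_add :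
    H₀.map C + ∑ i, (MvPolynomial.X i : MvPolynomial (Fin m) ℝ) • (H i).map C =
      bentalCertificate H₀ H X +
        ∑ i, (1 - MvPolynomial.X i ^ 2 : MvPolynomial (Fin m) ℝ) • ((2⁻¹ : ℝ) • X i).map C := by
  have hc : (2 : MvPolynomial (Fin m) ℝ) * C 2⁻¹ = 1 := by
    rw [← map_ofNat C 2, ← C_mul]; norm_num
  have hmap : ∀ A : Matrix (Fin n) (Fin n) ℝ,
      A.map C = (C : ℝ →+* MvPolynomial (Fin m) ℝ).mapMatrix A := fun _ => rfl
  simp only [bentalCertificate, hmap, map_sub, map_add, map_sum]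
  simp only [← hmap, map_smul' C _ _ (map_mul C)]
  rw [Finset.sum_congr rfl fun i _ => smul_eq_sq_smul_add_sq_smul hc (MvPolynomial.X i)
    ((X i).map C) ((H i).map C)]
  simp only [Finset.sum_sub_distrib, Finset.sum_add_distrib]
  abel

end bentalCertificate

theorem bental_implies_quadratic_psatz_general {n m : ℕ}
    (H₀ : Matrix (Fin n) (Fin n) ℝ) (H X : Fin m → Matrix (Fin n) (Fin n) ℝ)
    (hXpd : ∀ i, (X i).PosDef)
    (h1 : (H₀ - ∑ i : Fin m, X i).PosSemidef)
    (h2 : ∀ i, (X i + H i).PosSemidef)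
    (h3 : ∀ i, (X i - H i).PosSemidef) :
    ∃ (S₀ : Matrix (Fin n) (Fin n) (MvPolynomial (Fin m) ℝ))
      (S : Fin m → Matrix (Fin n) (Fin n) ℝ),
      IsSOSMatrix S₀ ∧ (∀ a b, (S₀ a b).totalDegree ≤ 2) ∧
      (∀ i, (S i).PosSemidef) ∧
      H₀.map MvPolynomial.C +
          ∑ i : Fin m, (MvPolynomial.X i : MvPolynomial (Fin m) ℝ) • (H i).map MvPolynomial.C =
        S₀ + ∑ i : Fin m,
          ((1 : MvPolynomial (Fin m) ℝ) - MvPolynomial.X i ^ 2) • (S i).map MvPolynomial.C :=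
  ⟨bentalCertificate H₀ H X, fun i => (2⁻¹ : ℝ) • X i,
    isSOSMatrix_bentalCertificate h1 h2 h3,
    fun a b => (mem_restrictTotalDegree _ _ _).mp
      (bentalCertificate_mem_matrix_restrictTotalDegree a b),
    fun i => (hXpd i).posSemidef.smul (by norm_num),
    add_sum_X_smul_eq_bentalCertificate_add⟩

theorem bental_implies_quadratic_psatz {n m : ℕ}
    (H₀ : Matrix (Fin n) (Fin n) ℝ) (H X : Fin m → Matrix (Fin n) (Fin n) ℝ)
    (h0 : H₀.IsSymm) (hH : ∀ i, (H i).IsSymm) (hX : ∀ i, (X i).IsSymm)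
    (hXpd : ∀ i, (X i).PosDef)
    (h1 : (H₀ - ∑ i : Fin m, X i).PosSemidef)
    (h2 : ∀ i, (X i + H i).PosSemidef)
    (h3 : ∀ i, (X i - H i).PosSemidef) :
    ∃ (S₀ : Matrix (Fin n) (Fin n) (MvPolynomial (Fin m) ℝ))
      (S : Fin m → Matrix (Fin n) (Fin n) ℝ),
      IsSOSMatrix S₀ ∧ (∀ a b, (S₀ a b).totalDegree ≤ 2) ∧
      (∀ i, (S i).PosSemidef) ∧
      H₀.map MvPolynomial.C +
          ∑ i : Fin m, (MvPolynomial.X i : MvPolynomial (Fin m) ℝ) • (H i).map MvPolynomial.C =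
        S₀ + ∑ i : Fin m,
          ((1 : MvPolynomial (Fin m) ℝ) - MvPolynomial.X i ^ 2) • (S i).map MvPolynomial.C :=
  bental_implies_quadratic_psatz_general H₀ H X hXpd h1 h2 h3
end

section
/- Let L ∈ S^{n(m+1)} be positive semidefinite with block partition (L_{ij})_{0≤i,j≤m}, satisfying L_{ij} = L_{ji} (each block symmetric), L_{ii} = L_{00} for i ≥ 1, and rank(L) = rank(L_{00}). Then L can be written as L = Σ_{k=1}^p α_k v_k v_k^T where p = rank(L), α_k > 0, and each v_k has the form v_k = (1, λ_{1k}, …, λ_{mk}) ⊗ u_k with λ_{ik} ∈ {-1, 1} and unit vectors u_k ∈ ℝ^n. -/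
/-!
Factor `L = Xᵀ X` with `X` having `rank L` rows and cut `X` into column blocks `Y₀, …, Yₘ`, so
that `L_ij = Y_iᵀ Y_j`. The rank hypothesis makes `Y₀` right invertible, say `Y₀ V = 1`. Then
`D_i := Y_i V` satisfies `D_i Y₀ = Y_i`, because `Y_iᵀ Y_i = Y₀ᵀ Y₀` forces `ker Y₀ ⊆ ker Y_i`.
Since `Y₀ᵀ A Y₀` determines `A`, the symmetry of the blocks makes the `D_i` symmetric and pairwise
commuting, and `L_ii = L_00` makes them involutions. An orthogonal `P` diagonalizing all `D_i`
at once gives `L_ij = Wᵀ diag(d_i d_j) W` with `W = Pᵀ Y₀` and `d_i ∈ {±1}ᵖ`; the normalized rows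
of `W` are the vectors `u_k`.
-/

open Matrix

namespace Matrix

theorem ne_zero_of_mul_eq_one {κ ι R : Type*} [Fintype ι] [DecidableEq κ] [CommRing R]
    [Nontrivial R] {W : Matrix κ ι R} {V : Matrix ι κ R} (hWV : W * V = 1) (k : κ) : W k ≠ 0 := by
  intro h
  simpa [mul_apply, h] using congrFun (congrFun hWV k) k

theorem transpose_mul_mul_eq {κ ι R : Type*} [Fintype κ] [CommRing R] {U : Matrix κ ι R}
    {D E : Matrix κ κ R} (hD : D.IsSymm) : Uᵀ * (D * E) * U = (D * U)ᵀ * (E * U) := by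
  rw [transpose_mul, hD.eq]; simp only [Matrix.mul_assoc]

section Gram

variable {κ ι : Type*} [Fintype κ] [Fintype ι]

theorem exists_mul_eq_one_of_rank_eq_card {K : Type*} [Field K] [DecidableEq κ]
    {U : Matrix κ ι K} (hU : U.rank = Fintype.card κ) : ∃ V : Matrix ι κ K, U * V = 1 := by
  refine mulVec_surjective_iff_exists_right_inverse.mp fun y => ?_
  have htop : LinearMap.range U.mulVecLin = ⊤ :=
    Submodule.eq_top_of_finrank_eq (by rw [Module.finrank_fintype_fun_eq_card]; exact hU)
  exact LinearMap.range_eq_top.mp htop y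

theorem eq_of_transpose_mul_mul_eq {R : Type*} [CommRing R] [DecidableEq κ]
    {U : Matrix κ ι R} {V : Matrix ι κ R} (hUV : U * V = 1) {A B : Matrix κ κ R}
    (h : Uᵀ * A * U = Uᵀ * B * U) : A = B := by
  have hVU : Vᵀ * Uᵀ = 1 := by rw [← transpose_mul, hUV, transpose_one]
  calc A = (Vᵀ * Uᵀ) * A * (U * V) := by rw [hVU, hUV, Matrix.one_mul, Matrix.mul_one]
    _ = Vᵀ * (Uᵀ * A * U) * V := by simp only [Matrix.mul_assoc]
    _ = Vᵀ * (Uᵀ * B * U) * V := by rw [h]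
    _ = (Vᵀ * Uᵀ) * B * (U * V) := by simp only [Matrix.mul_assoc]
    _ = B := by rw [hVU, hUV, Matrix.one_mul, Matrix.mul_one]

theorem commute_of_transpose_mul_comm {R : Type*} [CommRing R] [DecidableEq κ]
    {U : Matrix κ ι R} {V : Matrix ι κ R} (hUV : U * V = 1) {D E : Matrix κ κ R}
    (hD : D.IsSymm) (hE : E.IsSymm) (h : (D * U)ᵀ * (E * U) = (E * U)ᵀ * (D * U)) :
    Commute D E :=
  eq_of_transpose_mul_mul_eq hUV (by rw [transpose_mul_mul_eq hD, transpose_mul_mul_eq hE, h])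

theorem mul_eq_zero_of_transpose_mul_self_eq {ν : Type*} {Y U : Matrix κ ι ℝ}
    (h : Yᵀ * Y = Uᵀ * U) {Z : Matrix ι ν ℝ} (hZ : U * Z = 0) : Y * Z = 0 := by
  rw [← conjTranspose_mul_self_eq_zero, conjTranspose_eq_transpose_of_trivial]
  calc (Y * Z)ᵀ * (Y * Z) = Zᵀ * (Yᵀ * Y) * Z := by simp only [transpose_mul, Matrix.mul_assoc]
    _ = (U * Z)ᵀ * (U * Z) := by rw [h]; simp only [transpose_mul, Matrix.mul_assoc]
    _ = 0 := by rw [hZ, Matrix.mul_zero]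

theorem mul_mul_eq_of_transpose_mul_self_eq [DecidableEq κ] {U Y : Matrix κ ι ℝ}
    {V : Matrix ι κ ℝ} (hUV : U * V = 1) (hgram : Yᵀ * Y = Uᵀ * U) : Y * V * U = Y := by
  classical
  have hZ := mul_eq_zero_of_transpose_mul_self_eq hgram (Z := 1 - V * U) (by
    rw [Matrix.mul_sub, ← Matrix.mul_assoc, hUV, Matrix.one_mul, Matrix.mul_one, sub_self])
  rw [Matrix.mul_sub, Matrix.mul_one, sub_eq_zero] at hZ
  rw [Matrix.mul_assoc, ← hZ]

theorem isSymm_and_mul_self_eq_one_of_gram [DecidableEq κ] {U Y : Matrix κ ι ℝ}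
    {V : Matrix ι κ ℝ} (hUV : U * V = 1) (hgram : Yᵀ * Y = Uᵀ * U) (hsymm : Yᵀ * U = Uᵀ * Y) :
    (Y * V).IsSymm ∧ Y * V * (Y * V) = 1 := by
  have hDU := mul_mul_eq_of_transpose_mul_self_eq hUV hgram
  have hD : (Y * V).IsSymm := eq_of_transpose_mul_mul_eq hUV <|
    calc Uᵀ * (Y * V)ᵀ * U = (Y * V * U)ᵀ * U := by rw [transpose_mul (Y * V) U]
      _ = Uᵀ * (Y * V * U) := by rw [hDU, hsymm]
      _ = Uᵀ * (Y * V) * U := (Matrix.mul_assoc ..).symm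
  refine ⟨hD, eq_of_transpose_mul_mul_eq hUV ?_⟩
  rw [transpose_mul_mul_eq hD, hDU, hgram, Matrix.mul_one]

end Gram

section Orthogonal

variable {n R : Type*} [Fintype n] [DecidableEq n] [CommRing R] {P : Matrix n n R}

theorem mul_diagonal_mul_transpose_injective (hP : P ∈ orthogonalGroup n R) :
    Function.Injective fun d : n → R => P * diagonal d * Pᵀ := by
  intro d e h
  have hPP : Pᵀ * P = 1 := (mem_orthogonalGroup_iff' n R).mp hP
  have key : ∀ f : n → R, diagonal f = Pᵀ * (P * diagonal f * Pᵀ) * P := fun f => by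
    simp only [← Matrix.mul_assoc, hPP, Matrix.one_mul]; rw [Matrix.mul_assoc, hPP, Matrix.mul_one]
  exact diagonal_injective (by rw [key d, key e]; exact congrArg (Pᵀ * · * P) h)

theorem mul_diagonal_mul_transpose_mul (hP : P ∈ orthogonalGroup n R) (d e : n → R) :
    P * diagonal d * Pᵀ * (P * diagonal e * Pᵀ) = P * diagonal (d * e) * Pᵀ := by
  have hPP : Pᵀ * P = 1 := (mem_orthogonalGroup_iff' n R).mp hP
  simp only [← Matrix.mul_assoc]
  rw [Matrix.mul_assoc _ Pᵀ P, hPP, Matrix.mul_one, Matrix.mul_assoc P, diagonal_mul_diagonal]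
  rfl

end Orthogonal

theorem exists_orthonormalBasis_mulVec_eq_smul {ι n : Type*} [Fintype n] [DecidableEq n]
    {T : ι → Matrix n n ℝ} (hT : ∀ i, (T i).IsHermitian)
    (hC : Pairwise fun i j => Commute (T i) (T j)) :
    ∃ (b : OrthonormalBasis n ℝ (EuclideanSpace ℝ n)) (γ : n → ι → ℝ),
      ∀ i k, T i *ᵥ (b k).ofLp = γ k i • (b k).ofLp := by
  classical
  let S : ι → Module.End ℝ (EuclideanSpace ℝ n) := fun i => toEuclideanLin (T i)
  have hS : ∀ i, (S i).IsSymmetric := fun i => isSymmetric_toEuclideanLin_iff.mpr (hT i)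
  have hSC : Pairwise fun i j => Commute (S i) (S j) := fun i j hij => by
    simp only [S, Commute, SemiconjBy, Module.End.mul_eq_comp, ← toLpLin_mul_same, (hC hij).eq]
  let V : (ι → ℝ) → Submodule ℝ (EuclideanSpace ℝ n) := fun γ => ⨅ i, (S i).eigenspace (γ i)
  have hV : DirectSum.IsInternal V :=
    LinearMap.IsSymmetric.directSum_isInternal_of_pairwise_commute hS hSC
  -- only finitely many joint eigenspaces are nonzero, which makes the index type finite
  let := hV.submodule_iSupIndep.fintypeNeBotOfFiniteDimensional
  have hV' : DirectSum.IsInternal fun γ : {γ // V γ ≠ ⊥} => V γ :=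
    DirectSum.isInternal_ne_bot_iff.mpr hV
  have hO := (LinearMap.IsSymmetric.orthogonalFamily_iInf_eigenspaces hS).comp
    (Subtype.val_injective (p := fun γ => V γ ≠ ⊥))
  have hdim : Module.finrank ℝ (EuclideanSpace ℝ n) = Fintype.card n := finrank_euclideanSpace
  let b : OrthonormalBasis (Fin (Fintype.card n)) ℝ (EuclideanSpace ℝ n) :=
    hV'.subordinateOrthonormalBasis hdim hO
  refine ⟨b.reindex (Fintype.equivFin n).symm,
    fun k => (hV'.subordinateOrthonormalBasisIndex hdim (Fintype.equivFin n k) hO).1,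
    fun i k => ?_⟩
  have hk := hV'.subordinateOrthonormalBasis_subordinate hdim (Fintype.equivFin n k) hO
  have := Module.End.mem_eigenspace_iff.mp (Submodule.mem_iInf _ |>.mp hk i)
  simpa [S, b, toLpLin_apply] using congrArg WithLp.ofLp this

theorem exists_orthogonal_simultaneous_diagonalization {ι n : Type*} [Fintype n]
    [DecidableEq n] {T : ι → Matrix n n ℝ} (hT : ∀ i, (T i).IsHermitian)
    (hC : Pairwise fun i j => Commute (T i) (T j)) :
    ∃ P ∈ orthogonalGroup n ℝ, ∃ d : ι → n → ℝ, ∀ i, T i = P * diagonal (d i) * Pᵀ := by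
  obtain ⟨b, γ, hb⟩ := exists_orthonormalBasis_mulVec_eq_smul hT hC
  let P := (EuclideanSpace.basisFun n ℝ).toBasis.toMatrix b.toBasis
  have hP : P ∈ orthogonalGroup n ℝ :=
    (EuclideanSpace.basisFun n ℝ).toMatrix_orthonormalBasis_mem_unitary b
  have hPe : ∀ s k, P s k = b k s := fun s k => by simp [P, Module.Basis.toMatrix_apply]
  refine ⟨P, hP, fun i k => γ k i, fun i => ?_⟩
  have hTP : T i * P = P * diagonal (fun k => γ k i) := by
    ext t k
    rw [mul_diagonal, hPe, mul_comm, mul_apply]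
    simpa [mulVec, dotProduct, hPe] using congrFun (hb i k) t
  rw [← hTP, mul_assoc, (mem_orthogonalGroup_iff n ℝ).mp hP, mul_one]

theorem IsHermitian.eq_mul_diagonal_mul_transpose {n : Type*} [Fintype n] [DecidableEq n]
    {A : Matrix n n ℝ} (hA : A.IsHermitian) :
    A = (hA.eigenvectorUnitary : Matrix n n ℝ) * diagonal hA.eigenvalues *
      (hA.eigenvectorUnitary : Matrix n n ℝ)ᵀ := by
  conv_lhs => rw [hA.spectral_theorem, Unitary.conjStarAlgAut_apply]
  simp [star_eq_conjTranspose]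

theorem PosSemidef.exists_eq_transpose_mul_self {n : Type*} [Fintype n] [DecidableEq n]
    {A : Matrix n n ℝ} (hA : A.PosSemidef) : ∃ X : Matrix (Fin A.rank) n ℝ, A = Xᵀ * X := by
  set μ := hA.1.eigenvalues
  obtain ⟨Q, hQ⟩ : ∃ Q : Matrix n n ℝ, A = Q * diagonal μ * Qᵀ :=
    ⟨_, hA.1.eq_mul_diagonal_mul_transpose⟩
  let e : Fin A.rank ≃ {i // μ i ≠ 0} :=
    (Fintype.equivFinOfCardEq hA.1.rank_eq_card_non_zero_eigs.symm).symm
  refine ⟨of fun k a => √(μ (e k)) * Q a (e k), ?_⟩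
  ext a b
  calc A a b = ∑ i, μ i * (Q a i * Q b i) := by
        rw [hQ, mul_apply]
        simp only [mul_diagonal, transpose_apply]
        exact Finset.sum_congr rfl fun i _ => by ring
    _ = ∑ i : {i // μ i ≠ 0}, μ i * (Q a i * Q b i) := by
        rw [← Fintype.sum_subtype_add_sum_subtype (fun i => μ i ≠ 0), add_eq_left]
        exact Fintype.sum_eq_zero _ fun i => by simp [not_not.mp i.2]
    _ = _ := by
        rw [mul_apply, ← e.sum_comp]
        refine Finset.sum_congr rfl fun k _ => ?_
        have := Real.mul_self_sqrt (hA.eigenvalues_nonneg (e k))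
        simp only [transpose_apply, of_apply]
        linear_combination (Q a (e k) * Q b (e k)) * this.symm

theorem exists_sign_diagonalization_of_gram {ι κ n : Type*} [Fintype κ] [DecidableEq κ]
    [Fintype n] (Y : ι → Matrix κ n ℝ) (i₀ : ι) (hrank : (Y i₀).rank = Fintype.card κ)
    (hgram : ∀ i, (Y i)ᵀ * Y i = (Y i₀)ᵀ * Y i₀) (hsymm : ∀ i j, (Y i)ᵀ * Y j = (Y j)ᵀ * Y i) :
    ∃ (W : Matrix κ n ℝ) (d : ι → κ → ℝ), (∀ k, W k ≠ 0) ∧ d i₀ = 1 ∧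
      (∀ i k, d i k = 1 ∨ d i k = -1) ∧ ∀ i j, (Y i)ᵀ * Y j = Wᵀ * diagonal (d i * d j) * W := by
  obtain ⟨V, hV⟩ := exists_mul_eq_one_of_rank_eq_card hrank
  have hDY i := mul_mul_eq_of_transpose_mul_self_eq hV (hgram i)
  have hD i := isSymm_and_mul_self_eq_one_of_gram hV (hgram i) (hsymm i i₀)
  obtain ⟨P, hP, d, hd⟩ := exists_orthogonal_simultaneous_diagonalization (T := fun i => Y i * V)
    (fun i => isHermitian_iff_isSymm.mpr (hD i).1) fun i j _ =>
      commute_of_transpose_mul_comm hV (hD i).1 (hD j).1 (by rw [hDY i, hDY j, hsymm])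
  have hconj := mul_diagonal_mul_transpose_injective hP
  have hone : P * diagonal 1 * Pᵀ = 1 := by
    rw [show diagonal (1 : κ → ℝ) = 1 from diagonal_one, Matrix.mul_one,
      (mem_orthogonalGroup_iff κ ℝ).mp hP]
  refine ⟨Pᵀ * Y i₀, d, ne_zero_of_mul_eq_one (V := V * P) ?_, hconj ?_, fun i k => ?_,
    fun i j => ?_⟩
  · calc Pᵀ * Y i₀ * (V * P) = Pᵀ * (Y i₀ * V) * P := by simp only [Matrix.mul_assoc]
      _ = 1 := by rw [hV, Matrix.mul_one, (mem_orthogonalGroup_iff' κ ℝ).mp hP]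
  · dsimp only
    rw [hone, ← hd i₀, hV]
  · have hsq : d i * d i = 1 := hconj <| by
      dsimp only
      rw [← mul_diagonal_mul_transpose_mul hP, ← hd i, (hD i).2, hone]
    exact mul_self_eq_one_iff.mp (congrFun hsq k)
  · calc (Y i)ᵀ * Y j = (Y i * V * Y i₀)ᵀ * (Y j * V * Y i₀) := by rw [hDY i, hDY j]
      _ = (Y i₀)ᵀ * (Y i * V * (Y j * V)) * Y i₀ := (transpose_mul_mul_eq (hD i).1).symm
      _ = (Pᵀ * Y i₀)ᵀ * diagonal (d i * d j) * (Pᵀ * Y i₀) := by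
        rw [hd i, hd j, mul_diagonal_mul_transpose_mul hP]
        simp only [transpose_mul, transpose_transpose, Matrix.mul_assoc]

end Matrix

theorem exists_pos_sum_sq_eq_one_of_ne_zero {n : Type*} [Fintype n] {w : n → ℝ} (hw : w ≠ 0) :
    ∃ α : ℝ, 0 < α ∧ ∃ u : n → ℝ, ∑ a, u a ^ 2 = 1 ∧ w = √α • u := by
  obtain ⟨a, ha⟩ := Function.ne_iff.mp hw
  have hα : 0 < ∑ a, w a ^ 2 :=
    Finset.sum_pos' (fun _ _ => sq_nonneg _) ⟨a, Finset.mem_univ a, pow_two_pos_of_ne_zero ha⟩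
  refine ⟨_, hα, (√(∑ a, w a ^ 2))⁻¹ • w, ?_, ?_⟩
  · simp only [Pi.smul_apply, smul_eq_mul, mul_pow, ← Finset.mul_sum, inv_pow,
      Real.sq_sqrt hα.le, inv_mul_cancel₀ hα.ne']
  · rw [smul_smul, mul_inv_cancel₀ (Real.sqrt_pos.mpr hα).ne', one_smul]

theorem rank_one_decomposition_of_dual_solution {n m : ℕ}
    (L : Matrix (Fin (m + 1) × Fin n) (Fin (m + 1) × Fin n) ℝ)
    (hL : L.PosSemidef)
    (hblocksymm : ∀ (i j : Fin (m + 1)) (a b : Fin n), L (i, a) (j, b) = L (j, a) (i, b))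
    (hdiag : ∀ (i : Fin (m + 1)) (a b : Fin n), L (i, a) (i, b) = L (0, a) (0, b))
    (hrank : L.rank = (Matrix.of fun a b : Fin n => L (0, a) (0, b)).rank) :
    ∃ (α : Fin L.rank → ℝ) (lam : Fin m → Fin L.rank → ℝ) (u : Fin L.rank → Fin n → ℝ),
      (∀ k, 0 < α k) ∧
      (∀ i k, lam i k = 1 ∨ lam i k = -1) ∧
      (∀ k, ∑ a : Fin n, u k a ^ 2 = 1) ∧
      L = ∑ k : Fin L.rank, α k •
        Matrix.vecMulVec
          (fun q : Fin (m + 1) × Fin n => (Fin.cases 1 (fun i => lam i k) q.1 : ℝ) * u k q.2)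
          (fun q : Fin (m + 1) × Fin n => (Fin.cases 1 (fun i => lam i k) q.1 : ℝ) * u k q.2) := by
  obtain ⟨X, hX⟩ := hL.exists_eq_transpose_mul_self
  let Y : Fin (m + 1) → Matrix (Fin L.rank) (Fin n) ℝ := fun i => X.submatrix id (Prod.mk i)
  have hY i j a b : L (i, a) (j, b) = ((Y i)ᵀ * Y j) a b := congrFun (congrFun hX (i, a)) (j, b)
  obtain ⟨W, d, hW, hd0, hd, hLW⟩ := exists_sign_diagonalization_of_gram Y 0
    (calc (Y 0).rank = ((Y 0)ᵀ * Y 0).rank := (rank_transpose_mul_self _).symm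
      _ = L.rank := (congrArg rank (ext fun a b => (hY 0 0 a b).symm)).trans hrank.symm
      _ = Fintype.card (Fin L.rank) := (Fintype.card_fin _).symm)
    (fun i => ext fun a b => by rw [← hY, ← hY, hdiag])
    (fun i j => ext fun a b => by rw [← hY, ← hY, hblocksymm])
  choose α hα u hu hWu using fun k => exists_pos_sum_sq_eq_one_of_ne_zero (hW k)
  have hcases i k : (Fin.cases 1 (fun i => d i.succ k) i : ℝ) = d i k := by
    cases i using Fin.cases <;> simp [hd0]
  refine ⟨α, fun i k => d i.succ k, u, hα, fun i k => hd i.succ k, hu, ?_⟩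
  ext ⟨i, a⟩ ⟨j, b⟩
  rw [hY, hLW, Matrix.sum_apply, mul_apply]
  refine Finset.sum_congr rfl fun k _ => ?_
  simp only [mul_diagonal, transpose_apply, Matrix.smul_apply, vecMulVec_apply, hcases, hWu,
    Pi.smul_apply, Pi.mul_apply, smul_eq_mul]
  linear_combination (d i k * u k a * (d j k * u k b)) * Real.mul_self_sqrt (hα k).le
end
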